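/- For every m ≥ 1, λ > 0 and every Schwartz function f : ℝ^m → ℂ, the FBI transform is an isometry into the weighted space L²_Φ: ∫_{ℝ^{2m}} |T_λ f(x, ξ)|² e^{−λ|ξ|²} dx dξ = ∫_{ℝ^m} |f(y)|² dy. -/

import Mathlib

open MeasureTheory

/-- The FBI transform `T_λ f(x,ξ) = C_m λ^{3m/4} ∫ e^{−(λ/2)((x−y)² − 2iξ·(x−y) − ξ²)} f(y) dy`
with `C_m = 2^{−m/2} π^{−3m/4}`. -/
noncomputable def fbi {m : ℕ} (lam : ℝ) (f : EuclideanSpace ℝ (Fin m) → ℂ)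
    (z : EuclideanSpace ℝ (Fin m) × EuclideanSpace ℝ (Fin m)) : ℂ :=
  ((2 : ℝ) ^ (-(m : ℝ) / 2) * Real.pi ^ (-(3 * (m : ℝ)) / 4) * lam ^ (3 * (m : ℝ) / 4)) •
    ∫ y : EuclideanSpace ℝ (Fin m),
      Complex.exp (-((lam : ℂ) / 2) *
        (((inner ℝ (z.1 - y) (z.1 - y) : ℝ) : ℂ)
          - 2 * Complex.I * ((inner ℝ z.2 (z.1 - y) : ℝ) : ℂ)
          - ((inner ℝ z.2 z.2 : ℝ) : ℂ))) * f y

/-!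
Completing the square in the exponent, `T_λ f(x, ξ)` is `C_m λ^{3m/4} e^{λ|ξ|²/2}` times a phase
times the Fourier transform, at `λξ/2π`, of the Gaussian window `y ↦ e^{−λ|x−y|²/2} f(y)`.
The weight `e^{−λ|ξ|²}` cancels `e^{λ|ξ|²/2}`, so Plancherel in `ξ` gives
`∫ |T_λ f(x, ξ)|² e^{−λ|ξ|²} dξ = C_m² λ^{3m/2} (2π/λ)^m ∫ e^{−λ|x−y|²} |f(y)|² dy`.
Integrating in `x`, the Gaussian contributes `(π/λ)^{m/2}`, and all constants cancel.
Plancherel is applied in its Schwartz-space form: the window is a Schwartz function because the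
Gaussian has temperate growth.
-/

open Real Function
open scoped FourierTransform SchwartzMap Convolution RealInnerProductSpace

section GaussianWindow

variable {H : Type*} [NormedAddCommGroup H] [InnerProductSpace ℝ H]

lemma norm_iteratedFDerivWithin_exp_Iic_le_one {n : ℕ} {t : ℝ} (ht : t ∈ Set.Iic 0) :
    ‖iteratedFDerivWithin ℝ n exp (Set.Iic 0) t‖ ≤ 1 := by
  rw [iteratedFDerivWithin_eq_iteratedFDeriv (uniqueDiffOn_Iic 0)
      (contDiff_exp.contDiffAt.of_le le_top) ht,
    norm_iteratedFDeriv_eq_norm_iteratedDeriv, iteratedDeriv_eq_iterate, iter_deriv_exp,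
    norm_of_nonneg (exp_pos t).le]
  exact exp_le_one_iff.2 ht

/-- `exp` has bounded derivatives on `(-∞, 0]`, which contains the range of `-b‖v‖²`. -/
lemma hasTemperateGrowth_exp_neg_mul_norm_sq {b : ℝ} (hb : 0 ≤ b) :
    (fun v : H ↦ exp (-(b * ‖v‖ ^ 2))).HasTemperateGrowth := by
  refine HasTemperateGrowth.comp' (g := exp) (f := fun v : H ↦ -(b * ‖v‖ ^ 2)) (t := Set.Iic 0)
    ?_ (uniqueDiffOn_Iic 0) contDiff_exp.contDiffOn
    (fun _ ↦ ⟨0, 1, zero_le_one, fun _ _ t ht ↦ by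
      simpa using norm_iteratedFDerivWithin_exp_Iic_le_one ht⟩) (by fun_prop)
  rintro _ ⟨v, rfl⟩
  simp only [Set.mem_Iic, neg_nonpos]
  positivity

lemma hasTemperateGrowth_exp_neg_mul_norm_sub_sq {b : ℝ} (hb : 0 ≤ b) (x : H) :
    (fun y : H ↦ exp (-(b * ‖x - y‖ ^ 2))).HasTemperateGrowth :=
  (hasTemperateGrowth_exp_neg_mul_norm_sq hb).comp (f := fun y ↦ x - y) (by fun_prop)

noncomputable def gaussianWindow (b : ℝ) (x : H) (f : 𝓢(H, ℂ)) : 𝓢(H, ℂ) :=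
  SchwartzMap.smulLeftCLM ℂ (fun y ↦ exp (-(b * ‖x - y‖ ^ 2))) f

lemma gaussianWindow_apply {b : ℝ} (hb : 0 ≤ b) (x : H) (f : 𝓢(H, ℂ)) (y : H) :
    gaussianWindow b x f y = exp (-(b * ‖x - y‖ ^ 2)) • f y :=
  SchwartzMap.smulLeftCLM_apply_apply (hasTemperateGrowth_exp_neg_mul_norm_sub_sq hb x) f y

lemma norm_sq_gaussianWindow {b : ℝ} (hb : 0 ≤ b) (x : H) (f : 𝓢(H, ℂ)) (y : H) :
    ‖gaussianWindow b x f y‖ ^ 2 = exp (-(2 * b * ‖x - y‖ ^ 2)) * ‖f y‖ ^ 2 := by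
  rw [gaussianWindow_apply hb, norm_smul, norm_of_nonneg (exp_pos _).le, mul_pow, ← exp_nat_mul]
  ring_nf

end GaussianWindow

section Integrals

variable {V : Type*} [NormedAddCommGroup V] [InnerProductSpace ℝ V] [MeasurableSpace V]
  [BorelSpace V] [FiniteDimensional ℝ V]

lemma SchwartzMap.integrable_norm_sq_fourier_comp_smul (h : 𝓢(V, ℂ)) {R : ℝ} (hR : R ≠ 0) :
    Integrable fun ξ : V ↦ ‖𝓕 (⇑h) (R • ξ)‖ ^ 2 :=
  (integrable_comp_smul_iff volume (fun w ↦ ‖𝓕 (⇑h) w‖ ^ 2) hR).2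
    (((𝓕 h).memLp 2 volume).integrable_norm_pow two_ne_zero)

lemma SchwartzMap.integral_norm_sq_fourier_comp_smul (h : 𝓢(V, ℂ)) (R : ℝ) :
    ∫ ξ : V, ‖𝓕 (⇑h) (R • ξ)‖ ^ 2 = |R|⁻¹ ^ Module.finrank ℝ V * ∫ y, ‖h y‖ ^ 2 := by
  rw [Measure.integral_comp_smul volume (fun w ↦ ‖𝓕 (⇑h) w‖ ^ 2), ← SchwartzMap.fourier_coe,
    integral_norm_sq_fourier, smul_eq_mul, abs_inv, abs_pow, inv_pow]

/-- The inner integral is the convolution `u ⋆ e^{-b‖·‖²}`. -/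
lemma integral_integral_exp_neg_mul_norm_sub_sq_mul {b : ℝ} (hb : 0 < b) {u : V → ℝ}
    (hu : Integrable u) :
    Integrable (fun x ↦ ∫ y, exp (-(b * ‖x - y‖ ^ 2)) * u y) ∧
    ∫ x, ∫ y, exp (-(b * ‖x - y‖ ^ 2)) * u y
      = (π / b) ^ (Module.finrank ℝ V / 2 : ℝ) * ∫ y, u y := by
  have hI : ∫ v : V, exp (-(b * ‖v‖ ^ 2)) = (π / b) ^ (Module.finrank ℝ V / 2 : ℝ) := by
    simpa only [neg_mul] using GaussianFourier.integral_rexp_neg_mul_sq_norm hb (V := V)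
  have hgauss : Integrable fun v : V ↦ exp (-(b * ‖v‖ ^ 2)) :=
    .of_integral_ne_zero (by rw [hI]; positivity)
  have hconv : (fun x ↦ ∫ y, exp (-(b * ‖x - y‖ ^ 2)) * u y)
      = u ⋆[ContinuousLinearMap.mul ℝ ℝ] fun v ↦ exp (-(b * ‖v‖ ^ 2)) := by
    ext x
    simp [convolution_def, mul_comm]
  rw [hconv]
  refine ⟨hu.integrable_convolution _ hgauss, ?_⟩
  rw [integral_convolution _ hu hgauss]
  simp [hI, mul_comm]

end Integrals

lemma integral_prod_of_nonneg {α β : Type*} [MeasurableSpace α] [MeasurableSpace β]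
    {μ : Measure α} {ν : Measure β} [SFinite μ] [SFinite ν] {F : α × β → ℝ} (hF : 0 ≤ F)
    (hFm : AEStronglyMeasurable F (μ.prod ν))
    (hsec : ∀ᵐ x ∂μ, Integrable (fun y ↦ F (x, y)) ν)
    (hint : Integrable (fun x ↦ ∫ y, F (x, y) ∂ν) μ) :
    ∫ z, F z ∂(μ.prod ν) = ∫ x, ∫ y, F (x, y) ∂ν ∂μ := by
  refine integral_prod F ((integrable_prod_iff hFm).2 ⟨hsec, ?_⟩)
  simpa only [norm_of_nonneg (hF _)] using hint

section FBI

noncomputable def fbiConst (m : ℕ) (lam : ℝ) : ℝ :=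
  (2 : ℝ) ^ (-(m : ℝ) / 2) * π ^ (-(3 * (m : ℝ)) / 4) * lam ^ (3 * (m : ℝ) / 4)

variable {m : ℕ}

lemma fbiConst_pos {lam : ℝ} (hlam : 0 < lam) : 0 < fbiConst m lam := by
  unfold fbiConst
  positivity

lemma fbiConst_sq_mul {lam : ℝ} (hlam : 0 < lam) :
    fbiConst m lam ^ 2 * |lam / (2 * π)|⁻¹ ^ m * (π / lam) ^ (m / 2 : ℝ) = 1 := by
  have hπ := pi_pos
  rw [abs_of_pos (by positivity)]
  refine eq_one_of_pos_of_log_eq_zero (by unfold fbiConst; positivity) ?_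
  unfold fbiConst
  simp (disch := positivity) only [log_mul, log_pow, log_inv, log_rpow, log_div]
  ring

lemma fbi_eq_fourier (lam : ℝ) (f : EuclideanSpace ℝ (Fin m) → ℂ)
    (x ξ : EuclideanSpace ℝ (Fin m)) :
    fbi lam f (x, ξ) = fbiConst m lam •
      (Complex.exp (lam / 2 * ‖ξ‖ ^ 2 + lam * ⟪x, ξ⟫ * Complex.I) *
        𝓕 (fun y ↦ exp (-(lam / 2 * ‖x - y‖ ^ 2)) • f y) ((lam / (2 * π)) • ξ)) := by
  rw [Real.fourier_eq', ← integral_const_mul]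
  refine congrArg (fbiConst m lam • ·) (integral_congr_ae (.of_forall fun y ↦ ?_))
  simp only [Complex.real_smul, Complex.ofReal_exp, smul_eq_mul, ← mul_assoc, ← Complex.exp_add]
  congr 2
  rw [real_inner_self_eq_norm_sq, real_inner_self_eq_norm_sq]
  simp only [inner_sub_right, real_inner_smul_right, real_inner_comm x ξ, real_inner_comm y ξ]
  push_cast
  field_simp
  ring

lemma norm_sq_fbi_mul_exp {lam : ℝ} (hlam : 0 < lam) (f : 𝓢(EuclideanSpace ℝ (Fin m), ℂ))
    (x ξ : EuclideanSpace ℝ (Fin m)) :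
    ‖fbi lam f (x, ξ)‖ ^ 2 * exp (-lam * ‖ξ‖ ^ 2) =
      fbiConst m lam ^ 2 * ‖𝓕 (⇑(gaussianWindow (lam / 2) x f)) ((lam / (2 * π)) • ξ)‖ ^ 2 := by
  have hwindow : ⇑(gaussianWindow (lam / 2) x f) = fun y ↦ exp (-(lam / 2 * ‖x - y‖ ^ 2)) • f y :=
    funext (gaussianWindow_apply (by positivity) x f)
  set F := ‖𝓕 (⇑(gaussianWindow (lam / 2) x f)) ((lam / (2 * π)) • ξ)‖
  have hre : (lam / 2 * ‖ξ‖ ^ 2 + lam * ⟪x, ξ⟫ * Complex.I : ℂ).re = lam / 2 * ‖ξ‖ ^ 2 := by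
    simp [← Complex.ofReal_pow]
  have hexp : exp (lam / 2 * ‖ξ‖ ^ 2) ^ 2 * exp (-lam * ‖ξ‖ ^ 2) = 1 := by
    rw [← exp_nat_mul, ← exp_add]
    ring_nf
    exact exp_zero
  rw [fbi_eq_fourier, ← hwindow, norm_smul, norm_mul, Complex.norm_exp, hre,
    norm_of_nonneg (fbiConst_pos hlam).le]
  linear_combination (fbiConst m lam * F) ^ 2 * hexp

lemma integral_norm_sq_fbi_mul_exp {lam : ℝ} (hlam : 0 < lam)
    (f : 𝓢(EuclideanSpace ℝ (Fin m), ℂ)) (x : EuclideanSpace ℝ (Fin m)) :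
    Integrable (fun ξ ↦ ‖fbi lam f (x, ξ)‖ ^ 2 * exp (-lam * ‖ξ‖ ^ 2)) ∧
    ∫ ξ, ‖fbi lam f (x, ξ)‖ ^ 2 * exp (-lam * ‖ξ‖ ^ 2) =
      fbiConst m lam ^ 2 * |lam / (2 * π)|⁻¹ ^ m * ∫ y, exp (-(lam * ‖x - y‖ ^ 2)) * ‖f y‖ ^ 2 := by
  simp_rw [norm_sq_fbi_mul_exp hlam f x]
  refine ⟨(SchwartzMap.integrable_norm_sq_fourier_comp_smul _ (by positivity)).const_mul _, ?_⟩
  rw [integral_const_mul, SchwartzMap.integral_norm_sq_fourier_comp_smul,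
    finrank_euclideanSpace_fin]
  simp_rw [norm_sq_gaussianWindow (by positivity : 0 ≤ lam / 2), mul_div_cancel₀ lam two_ne_zero]
  ring

lemma stronglyMeasurable_fbi (lam : ℝ) {f : EuclideanSpace ℝ (Fin m) → ℂ} (hf : Continuous f) :
    StronglyMeasurable (fbi lam f) := by
  unfold fbi
  refine .fun_const_smul (.integral_prod_right ?_) _
  exact Continuous.stronglyMeasurable (by fun_prop)

end FBI

theorem statement10_general (m : ℕ) (lam : ℝ) (hlam : 0 < lam)
    (f : SchwartzMap (EuclideanSpace ℝ (Fin m)) ℂ) :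
    ∫ z : EuclideanSpace ℝ (Fin m) × EuclideanSpace ℝ (Fin m),
        ‖fbi lam (⇑f) z‖ ^ 2 * Real.exp (-lam * ‖z.2‖ ^ 2)
      = ∫ y : EuclideanSpace ℝ (Fin m), ‖f y‖ ^ 2 := by
  have hsection := integral_norm_sq_fbi_mul_exp hlam f
  obtain ⟨hconv_int, hconv⟩ := integral_integral_exp_neg_mul_norm_sub_sq_mul hlam
    ((f.memLp 2 volume).integrable_norm_pow two_ne_zero)
  have hmeas : AEStronglyMeasurable
      (fun z ↦ ‖fbi lam (⇑f) z‖ ^ 2 * exp (-lam * ‖z.2‖ ^ 2)) (volume.prod volume) :=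
    (((stronglyMeasurable_fbi lam f.continuous).norm.pow 2).mul
      (by fun_prop : Continuous fun z : EuclideanSpace ℝ (Fin m) × _ ↦ exp (-lam * ‖z.2‖ ^ 2)
        ).stronglyMeasurable).aestronglyMeasurable
  calc _ = ∫ x, ∫ ξ, ‖fbi lam (⇑f) (x, ξ)‖ ^ 2 * exp (-lam * ‖ξ‖ ^ 2) := by
        rw [Measure.volume_eq_prod]
        refine integral_prod_of_nonneg (fun z ↦ by positivity) hmeas
          (.of_forall fun x ↦ (hsection x).1) ?_
        simp_rw [(hsection _).2]
        exact hconv_int.const_mul _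
    _ = ∫ x, fbiConst m lam ^ 2 * |lam / (2 * π)|⁻¹ ^ m *
          ∫ y, exp (-(lam * ‖x - y‖ ^ 2)) * ‖f y‖ ^ 2 :=
        integral_congr_ae (.of_forall fun x ↦ (hsection x).2)
    _ = fbiConst m lam ^ 2 * |lam / (2 * π)|⁻¹ ^ m *
          ((π / lam) ^ (m / 2 : ℝ) * ∫ y, ‖f y‖ ^ 2) := by
        rw [integral_const_mul, hconv, finrank_euclideanSpace_fin]
    _ = ∫ y, ‖f y‖ ^ 2 := by
        rw [← mul_assoc, fbiConst_sq_mul hlam, one_mul]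

/-- the FBI transform is an isometry into the weighted space `L²_Φ`,
`Φ(x,ξ) = e^{−λ|ξ|²}`. -/
theorem statement10 (m : ℕ) (hm : 1 ≤ m) (lam : ℝ) (hlam : 0 < lam)
    (f : SchwartzMap (EuclideanSpace ℝ (Fin m)) ℂ) :
    ∫ z : EuclideanSpace ℝ (Fin m) × EuclideanSpace ℝ (Fin m),
        ‖fbi lam (⇑f) z‖ ^ 2 * Real.exp (-lam * ‖z.2‖ ^ 2)
      = ∫ y : EuclideanSpace ℝ (Fin m), ‖f y‖ ^ 2 :=
  statement10_general m lam hlam f
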